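/- arXiv:math/0204166 — 2 statements merged into one kernel-verified Lean document; each statement's English description precedes it below -/
import Mathlib

section
/- For n ≥ 3, the degree of the minimum directrix curve of the fundamental incidence scroll, namely m(n) = 3*(2n-4)!/((n-3)! * n!), is a positive integer; i.e., (n-3)! * n! divides 3*(2n-4)!. -/
/-- For `n ≥ 3`, the degree `m(n) = 3 * (2n-4)! / ((n-3)! * n!)` of the minimum directrix
curve of the fundamental incidence scroll is a positive integer:
`(n-3)! * n!` divides `3 * (2n-4)!`. -/
theorem minimum_directrix_degree_integral (n : ℕ) (hn : 3 ≤ n) :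
    Nat.factorial (n - 3) * Nat.factorial n ∣ 3 * Nat.factorial (2 * n - 4) := by
  obtain ⟨k, rfl⟩ : ∃ k, n = k + 3 := ⟨n - 3, by omega⟩
  rcases k with _ | j
  · decide
  · have e1 : j + 1 + 3 - 3 = j + 1 := by omega
    have e2 : 2 * (j + 1 + 3) - 4 = 2 * j + 4 := by omega
    have e3 : j + 1 + 3 = j + 4 := by omega
    rw [e1, e2, e3]
    have h1 : Nat.choose (2*j+4) (j+1) * Nat.factorial (j+1) * Nat.factorial (j+3)
        = Nat.factorial (2*j+4) := by
      have h := Nat.choose_mul_factorial_mul_factorial (show j+1 ≤ 2*j+4 by omega)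
      rwa [show 2*j+4 - (j+1) = j+3 by omega] at h
    have h2 : Nat.choose (2*j+4) j * Nat.factorial j * Nat.factorial (j+4)
        = Nat.factorial (2*j+4) := by
      have h := Nat.choose_mul_factorial_mul_factorial (show j ≤ 2*j+4 by omega)
      rwa [show 2*j+4 - j = j+4 by omega] at h
    have hle : Nat.choose (2*j+4) j ≤ Nat.choose (2*j+4) (j+1) :=
      Nat.choose_le_succ_of_lt_half_left (by omega)
    refine ⟨Nat.choose (2*j+4) (j+1) - Nat.choose (2*j+4) j, ?_⟩
    have hA : Nat.factorial (j+1) * Nat.factorial (j+4) * Nat.choose (2*j+4) (j+1)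
        = (j+4) * Nat.factorial (2*j+4) := by
      rw [show Nat.factorial (j+4) = (j+4) * Nat.factorial (j+3) from rfl]
      rw [← h1]; ring
    have hB : Nat.factorial (j+1) * Nat.factorial (j+4) * Nat.choose (2*j+4) j
        = (j+1) * Nat.factorial (2*j+4) := by
      rw [show Nat.factorial (j+1) = (j+1) * Nat.factorial j from rfl]
      rw [← h2]; ring
    rw [Nat.mul_sub, hA, hB,
      show (j+4) * Nat.factorial (2*j+4) = 3 * Nat.factorial (2*j+4) + (j+1) * Nat.factorial (2*j+4) by ring,
      Nat.add_sub_cancel]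
end

section
/- Define Δ(r,h1,h2) for 1 ≤ h2 ≤ h1 by Δ(r,h1,1) = h1*(r-h1+2) and Δ(r,h1,h2) = Δ(r,h1-1,h2-1) + Δ(r-2,h1-1,h2-1) for h2 ≥ 2. Then Δ(r,h1,h2) = Σ_{k=0}^{h2-1} C(h2-1,k)*(h1-h2+1)*(r-2k-h1+h2+1). -/
open Finset

lemma pascal_sum_aux (m : ℕ) (g : ℕ → ℤ) :
    ∑ k ∈ range (m+2), (Nat.choose (m+1) k : ℤ) * g k
    = ∑ k ∈ range (m+1), (Nat.choose m k : ℤ) * g k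
      + ∑ k ∈ range (m+1), (Nat.choose m k : ℤ) * g (k+1) := by
  rw [Finset.sum_range_succ' _ (m+1)]
  have hch : ∀ k : ℕ, (Nat.choose (m+1) (k+1) : ℤ)
      = (Nat.choose m k : ℤ) + (Nat.choose m (k+1) : ℤ) := by
    intro k; rw [Nat.choose_succ_succ]; push_cast; ring
  simp only [hch, add_mul, Finset.sum_add_distrib]
  have h2 : ∑ k ∈ range (m+1), (Nat.choose m (k+1) : ℤ) * g (k+1)
      + (Nat.choose (m+1) 0 : ℤ) * g 0
      = ∑ k ∈ range (m+1), (Nat.choose m k : ℤ) * g k := by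
    rw [Finset.sum_range_succ, Nat.choose_succ_self]
    rw [Finset.sum_range_succ' (fun k => (Nat.choose m k : ℤ) * g k) m]
    simp
  linarith [h2]

/-- With `Δ(r,h1,1) = h1(r-h1+2)` and
`Δ(r,h1,h2) = Δ(r,h1-1,h2-1) + Δ(r-2,h1-1,h2-1)` for `h2 ≥ 2`, one has, for
`1 ≤ h2 ≤ h1`,
`Δ(r,h1,h2) = ∑_{k=0}^{h2-1} C(h2-1,k) (h1-h2+1) (r-2k-h1+h2+1)`. -/
theorem delta_two_index_closed_form (Δ : ℤ → ℤ → ℕ → ℤ)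
    (h1 : ∀ (r h1 : ℤ), Δ r h1 1 = h1 * (r - h1 + 2))
    (hrec : ∀ (r h1 : ℤ) (h2 : ℕ), 2 ≤ h2 → (h2 : ℤ) ≤ h1 →
      Δ r h1 h2 = Δ r (h1 - 1) (h2 - 1) + Δ (r - 2) (h1 - 1) (h2 - 1)) :
    ∀ (r h1 : ℤ) (h2 : ℕ), 1 ≤ h2 → (h2 : ℤ) ≤ h1 →
      Δ r h1 h2 = ∑ k ∈ range h2,
        (Nat.choose (h2 - 1) k : ℤ) * (h1 - h2 + 1) * (r - 2 * k - h1 + h2 + 1) := by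
  suffices H : ∀ h2 : ℕ, 1 ≤ h2 → ∀ r a : ℤ, (h2 : ℤ) ≤ a →
      Δ r a h2 = ∑ k ∈ range h2,
        (Nat.choose (h2 - 1) k : ℤ) * (a - h2 + 1) * (r - 2 * k - a + h2 + 1) by
    exact fun r a h2 hh hle => H h2 hh r a hle
  intro h2 hh2
  induction h2, hh2 using Nat.le_induction with
  | base =>
    intro r a _
    simp only [Finset.sum_range_one, h1, Nat.choose_self, Nat.cast_one, one_mul]
    push_cast
    ring
  | succ n hn ih =>
    intro r a ha
    have hle' : (n : ℤ) ≤ a - 1 := by push_cast at ha ⊢; omega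
    rw [hrec r a (n+1) (by omega) ha, Nat.add_sub_cancel,
      ih r (a-1) hle', ih (r-2) (a-1) hle']
    obtain ⟨m, rfl⟩ : ∃ m, n = m + 1 := ⟨n - 1, by omega⟩
    rw [show m+1+1 = m+2 from rfl]
    push_cast
    simp only [mul_assoc]
    rw [pascal_sum_aux m (fun k => ((a : ℤ) - ((m:ℤ)+2) + 1) * (r - 2*(k:ℤ) - a + ((m:ℤ)+2) + 1))]
    congr 1
    · exact Finset.sum_congr rfl fun k _ => by ring
    · exact Finset.sum_congr rfl fun k _ => by push_cast; ring
end
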